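/- Let (Γ, d) be a countable metric space, 𝓛 a dissipative interaction, Λ ⊂ Γ finite, and π a state on 𝒜_Λ that is a local dynamical fixed-point of 𝓛 with convergence governed by g_Λ (i.e., π∘T_t^Λ = π for all t and |(π − ω)(T_t^Λ(A))| ≤ g_Λ(t)‖A‖ for all states ω and all A). Then for any X, Y ⊂ Λ with d(X,Y) > 0, any A ∈ 𝒜_X, B ∈ 𝒜_Y, any state ω on 𝒜_Λ, and any t ≥ 0: |π(AB) − π(A)π(B)| ≤ |ω(T_t^Λ(A·B_t^ω))| + 3‖A‖‖B‖ g_Λ(t), where B_t^ω := B − ω(T_t^Λ(B))·1. -/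

import Mathlib

/-!
Put `σ = ω ∘ T_t`, again a state. Since `π` is `T_t`-invariant, `π C - σ C = (π - ω)(T_t C)`,
so `π` and `σ` are `g t`-close on every observable. With `C = A (B - σ(B) 1)`,
`π(AB) - π(A)π(B) = (π - σ)(C) + σ(C) + π(A) (σ(B) - π(B))`, and since states have norm one,
`‖C‖ ≤ 2 ‖A‖ ‖B‖`: the outer terms cost `2 g ‖A‖ ‖B‖` and `g ‖A‖ ‖B‖`.
-/

open scoped ComplexOrder

/-- A state on `B(H)`: a unital positive continuous linear functional. -/
def IsQState' {H : Type*} [NormedAddCommGroup H] [InnerProductSpace ℂ H]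
    [FiniteDimensional ℂ H] (φ : (H →L[ℂ] H) →L[ℂ] ℂ) : Prop :=
  φ 1 = 1 ∧ ∀ a : H →L[ℂ] H, 0 ≤ φ (star a * a)

namespace PositiveLinearMap

variable {A : Type*} [CStarAlgebra A] [PartialOrder A] [StarOrderedRing A]

lemma norm_toPreGNS_sq (f : A →ₚ[ℂ] ℂ) (x : A) : ‖f.toPreGNS x‖ ^ 2 = ‖f (star x * x)‖ := by
  have h := f.preGNS_norm_sq (f.toPreGNS x)
  rw [ofPreGNS_toPreGNS] at h
  rw [← h, ← Complex.ofReal_pow, Complex.norm_real, Real.norm_of_nonneg (by positivity)]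

/-- Cauchy–Schwarz for the GNS semi-inner product `⟪x, y⟫ = f (x⋆ y)`, applied to `1` and `a`. -/
lemma norm_apply_le_norm_apply_one (f : A →ₚ[ℂ] ℂ) (a : A) : ‖f a‖ ≤ ‖f 1‖ * ‖a‖ := by
  have hcs : ‖f a‖ ≤ ‖f.toPreGNS 1‖ * ‖f.toPreGNS a‖ := by
    simpa [preGNS_inner_def] using norm_inner_le_norm (𝕜 := ℂ) (f.toPreGNS 1) (f.toPreGNS a)
  have h1 : ‖f.toPreGNS 1‖ ^ 2 = ‖f 1‖ := by simpa using f.norm_toPreGNS_sq 1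
  have ha : ‖f.toPreGNS a‖ ^ 2 ≤ ‖f 1‖ * ‖a‖ ^ 2 := by
    rw [f.norm_toPreGNS_sq, sq, ← CStarRing.norm_star_mul_self]
    exact f.norm_apply_le_of_nonneg _ (star_mul_self_nonneg a)
  refine le_of_sq_le_sq ?_ (by positivity)
  calc ‖f a‖ ^ 2 ≤ ‖f.toPreGNS 1‖ ^ 2 * ‖f.toPreGNS a‖ ^ 2 := by
        rw [← mul_pow]; gcongr
    _ ≤ (‖f 1‖ * ‖a‖) ^ 2 := by rw [h1, mul_pow, sq ‖f 1‖, mul_assoc]; gcongr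

end PositiveLinearMap

namespace IsQState'

variable {H : Type*} [NormedAddCommGroup H] [InnerProductSpace ℂ H] [FiniteDimensional ℂ H]
  {φ : (H →L[ℂ] H) →L[ℂ] ℂ}

lemma map_nonneg (hφ : IsQState' φ) {x : H →L[ℂ] H} (hx : 0 ≤ x) : 0 ≤ φ x := by
  rw [StarOrderedRing.nonneg_iff] at hx
  induction hx using AddSubmonoid.closure_induction with
  | mem y hy => obtain ⟨s, rfl⟩ := hy; exact hφ.2 s
  | zero => simp
  | add a b _ _ ha hb => rw [map_add]; exact add_nonneg ha hb

lemma norm_apply_le (hφ : IsQState' φ) (a : H →L[ℂ] H) : ‖φ a‖ ≤ ‖a‖ := by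
  have h :=
    (PositiveLinearMap.mk₀ φ.toLinearMap fun _ ↦ hφ.map_nonneg).norm_apply_le_norm_apply_one a
  change ‖φ a‖ ≤ ‖φ 1‖ * ‖a‖ at h
  simpa [hφ.1] using h

lemma comp (hφ : IsQState' φ) {T : (H →L[ℂ] H) →L[ℂ] (H →L[ℂ] H)} (hunital : T 1 = 1)
    (hpos : ∀ a : H →L[ℂ] H, a.IsPositive → (T a).IsPositive) : IsQState' (φ.comp T) := by
  refine ⟨by simp [hunital, hφ.1], fun a ↦ hφ.map_nonneg ?_⟩
  rw [ContinuousLinearMap.nonneg_iff_isPositive]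
  exact hpos _ ((ContinuousLinearMap.nonneg_iff_isPositive _).mp (star_mul_self_nonneg a))

end IsQState'

section Correlation

variable {𝕜 E : Type*} [NontriviallyNormedField 𝕜] [NormedAddCommGroup E] [NormedSpace 𝕜 E]

lemma norm_sub_smul_one_le {B : E →L[𝕜] E} {β : 𝕜} (hβ : ‖β‖ ≤ ‖B‖) :
    ‖B - β • (1 : E →L[𝕜] E)‖ ≤ 2 * ‖B‖ := by
  have h1 : ‖β • (1 : E →L[𝕜] E)‖ ≤ ‖B‖ :=
    calc ‖β • (1 : E →L[𝕜] E)‖ ≤ ‖β‖ * ‖ContinuousLinearMap.id 𝕜 E‖ := norm_smul_le _ _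
      _ ≤ ‖B‖ * 1 := by gcongr; exact ContinuousLinearMap.norm_id_le
      _ = ‖B‖ := mul_one _
  linarith [norm_sub_le B (β • (1 : E →L[𝕜] E))]

lemma norm_correlation_le_of_norm_sub_le {π σ : (E →L[𝕜] E) →L[𝕜] 𝕜} {ε : ℝ} (hε : 0 ≤ ε)
    (hπ : ∀ a, ‖π a‖ ≤ ‖a‖) (hσ : ∀ a, ‖σ a‖ ≤ ‖a‖) (hclose : ∀ a, ‖π a - σ a‖ ≤ ε * ‖a‖)
    (A B : E →L[𝕜] E) :
    ‖π (A * B) - π A * π B‖ ≤ ‖σ (A * (B - σ B • 1))‖ + 3 * ‖A‖ * ‖B‖ * ε := by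
  set C := A * (B - σ B • 1)
  have hC : ‖C‖ ≤ ‖A‖ * (2 * ‖B‖) :=
    (norm_mul_le _ _).trans (by gcongr; exact norm_sub_smul_one_le (hσ B))
  have hshift : ‖π A * (σ B - π B)‖ ≤ ‖A‖ * (ε * ‖B‖) := by
    rw [norm_mul, norm_sub_rev]
    exact mul_le_mul (hπ A) (hclose B) (norm_nonneg _) (norm_nonneg _)
  have hdecomp : π (A * B) - π A * π B = (π C - σ C) + σ C + π A * (σ B - π B) := by
    simp only [C, mul_sub, mul_smul_comm, mul_one, map_sub, map_smul, smul_eq_mul]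
    ring
  calc ‖π (A * B) - π A * π B‖
      ≤ ‖π C - σ C‖ + ‖σ C‖ + ‖π A * (σ B - π B)‖ := by
        rw [hdecomp]; exact norm_add₃_le
    _ ≤ ε * (‖A‖ * (2 * ‖B‖)) + ‖σ C‖ + ‖A‖ * (ε * ‖B‖) := by
        gcongr
        exact (hclose C).trans (by gcongr)
    _ = ‖σ C‖ + 3 * ‖A‖ * ‖B‖ * ε := by ring

end Correlation

theorem fixed_point_correlation_decay_general
    {H : Type*} [NormedAddCommGroup H] [InnerProductSpace ℂ H] [FiniteDimensional ℂ H]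
    (T : ℝ → ((H →L[ℂ] H) →L[ℂ] (H →L[ℂ] H)))
    (hunital : ∀ t : ℝ, 0 ≤ t → T t 1 = 1)
    (hpos : ∀ t : ℝ, 0 ≤ t → ∀ a : H →L[ℂ] H, a.IsPositive → (T t a).IsPositive)
    (π : (H →L[ℂ] H) →L[ℂ] ℂ) (hπ : IsQState' π)
    (hπfix : ∀ t : ℝ, 0 ≤ t → ∀ A : H →L[ℂ] H, π (T t A) = π A)
    (g : ℝ → ℝ) (hg : ∀ t : ℝ, 0 ≤ t → 0 ≤ g t ∧ g t ≤ 2)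
    (hconv : ∀ ω : (H →L[ℂ] H) →L[ℂ] ℂ, IsQState' ω →
      ∀ A : H →L[ℂ] H, ∀ t : ℝ, 0 ≤ t →
        ‖π (T t A) - ω (T t A)‖ ≤ g t * ‖A‖) :
    ∀ A B : H →L[ℂ] H, ∀ ω : (H →L[ℂ] H) →L[ℂ] ℂ, IsQState' ω → ∀ t : ℝ, 0 ≤ t →
      ‖π (A * B) - π A * π B‖ ≤
        ‖ω (T t (A * (B - ω (T t B) • 1)))‖ + 3 * ‖A‖ * ‖B‖ * g t := by
  intro A B ω hω t ht
  have hσ : IsQState' (ω.comp (T t)) := hω.comp (hunital t ht) (hpos t ht)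
  have hclose (a : H →L[ℂ] H) : ‖π a - ω.comp (T t) a‖ ≤ g t * ‖a‖ := by
    rw [← hπfix t ht a]
    exact hconv ω hω a t ht
  exact norm_correlation_le_of_norm_sub_le (hg t ht).1 hπ.norm_apply_le hσ.norm_apply_le hclose A B

/-- Let `T_t^Λ` be the finite-volume irreversible (unital positive) dynamics
of a quantum spin system on a finite volume `Λ` (the local algebra `𝒜_Λ` realized as
`B(H)`), and `π` a local dynamical fixed point with convergence governed by `g`
(`π ∘ T_t = π` and `|(π − ω)(T_t A)| ≤ g t ‖A‖` for all states `ω` and observables `A`).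
Then for any observables `A, B` (in particular any `A ∈ 𝒜_X`, `B ∈ 𝒜_Y` with
`d(X,Y) > 0`), any state `ω` and any `t ≥ 0`:
`|π(AB) − π(A)π(B)| ≤ |ω(T_t(A·B_t^ω))| + 3 ‖A‖ ‖B‖ g t`, where
`B_t^ω = B − ω(T_t B)·1`. -/
theorem fixed_point_correlation_decay
    {H : Type*} [NormedAddCommGroup H] [InnerProductSpace ℂ H] [FiniteDimensional ℂ H]
    (T : ℝ → ((H →L[ℂ] H) →L[ℂ] (H →L[ℂ] H)))
    (hT0 : T 0 = 1)
    (hsemi : ∀ s t : ℝ, 0 ≤ s → 0 ≤ t → T (s + t) = T s ∘L T t)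
    (hunital : ∀ t : ℝ, 0 ≤ t → T t 1 = 1)
    (hpos : ∀ t : ℝ, 0 ≤ t → ∀ a : H →L[ℂ] H, a.IsPositive → (T t a).IsPositive)
    (π : (H →L[ℂ] H) →L[ℂ] ℂ) (hπ : IsQState' π)
    (hπfix : ∀ t : ℝ, 0 ≤ t → ∀ A : H →L[ℂ] H, π (T t A) = π A)
    (g : ℝ → ℝ) (hg : ∀ t : ℝ, 0 ≤ t → 0 ≤ g t ∧ g t ≤ 2)
    (hconv : ∀ ω : (H →L[ℂ] H) →L[ℂ] ℂ, IsQState' ω →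
      ∀ A : H →L[ℂ] H, ∀ t : ℝ, 0 ≤ t →
        ‖π (T t A) - ω (T t A)‖ ≤ g t * ‖A‖) :
    ∀ A B : H →L[ℂ] H, ∀ ω : (H →L[ℂ] H) →L[ℂ] ℂ, IsQState' ω → ∀ t : ℝ, 0 ≤ t →
      ‖π (A * B) - π A * π B‖ ≤
        ‖ω (T t (A * (B - ω (T t B) • 1)))‖ + 3 * ‖A‖ * ‖B‖ * g t :=
  fixed_point_correlation_decay_general T hunital hpos π hπ hπfix g hg hconv
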